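/- arXiv:1203.6168 — 2 statements merged into one kernel-verified Lean document; each statement's English description precedes it below -/
import Mathlib

section
/- Let Γ be a group, Γ₀ ≤ Γ a subgroup of finite index, and t : Γ/Γ₀ → Γ a transversal (a function with t(c)Γ₀ = c for every coset c). Given a group homomorphism ρ : Γ₀ → U(n), define for each g ∈ Γ the square complex matrix Ind(ρ)(g) indexed by (Γ/Γ₀) × Fin n, whose entry at ((c,i),(d,j)) is ρ(t(c)⁻¹ g t(d))_{ij} if t(c)⁻¹ g t(d) ∈ Γ₀ and 0 otherwise. Then each Ind(ρ)(g) is a unitary matrix and g ↦ Ind(ρ)(g) is a group homomorphism from Γ to the unitary group of matrices indexed by (Γ/Γ₀) × Fin n. -/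
/-!
Write `Ind(ρ)(g)` as a `Γ/Γ₀ × Γ/Γ₀` block matrix whose `(c, d)` block is `ρ` extended by zero,
evaluated at `t(c)⁻¹ g t(d)`. That element lies in `Γ₀` exactly when `c = g • d`, so every block
row and every block column has a single nonzero block; multiplying block matrices, the only
surviving term of `∑_d` is `d = h • e`, where the right factor `t(d)⁻¹ h t(e)` lies in `Γ₀`, and
extension by zero is multiplicative whenever one factor lies in `Γ₀`. Unitarity follows because
`Ind(ρ)(g⁻¹)` is the conjugate transpose of `Ind(ρ)(g)`, as `ρ(x⁻¹) = ρ(x)ᴴ`.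
-/

/-- The induced representation matrix: given a subgroup `Γ₀ ≤ Γ`, a transversal
`t : Γ/Γ₀ → Γ`, and a unitary representation `ρ : Γ₀ → U(n)`, the matrix of
`Ind(ρ)(g)`, indexed by `(Γ/Γ₀) × Fin n`, has `((c,i),(d,j))` entry
`ρ(t(c)⁻¹ g t(d))_{ij}` when `t(c)⁻¹ g t(d) ∈ Γ₀` and `0` otherwise. -/
def inducedRep {Γ : Type*} [Group Γ] (Γ₀ : Subgroup Γ) [DecidablePred (· ∈ Γ₀)]
    (t : Γ ⧸ Γ₀ → Γ) {n : ℕ} (ρ : Γ₀ →* Matrix.unitaryGroup (Fin n) ℂ) (g : Γ) :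
    Matrix ((Γ ⧸ Γ₀) × Fin n) ((Γ ⧸ Γ₀) × Fin n) ℂ :=
  fun p q =>
    if h : (t p.1)⁻¹ * g * t q.1 ∈ Γ₀ then
      (ρ ⟨(t p.1)⁻¹ * g * t q.1, h⟩ : Matrix (Fin n) (Fin n) ℂ) p.2 q.2
    else 0

theorem MonoidHom.mem_unitary_of_map_inv {G M : Type*} [Group G] [Monoid M] [StarMul M]
    (f : G →* M) (hf : ∀ g, f g⁻¹ = star (f g)) (g : G) : f g ∈ unitary M := by
  rw [Unitary.mem_iff, ← hf, ← map_mul, ← map_mul, inv_mul_cancel, mul_inv_cancel, map_one]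
  exact ⟨rfl, rfl⟩

theorem Matrix.comp_star {I K R : Type*} [Star R] (M : Matrix I I (Matrix K K R)) :
    Matrix.comp I I K K R (star M) = star (Matrix.comp I I K K R M) :=
  rfl

theorem QuotientGroup.inv_mul_mul_mem_iff_eq_smul {Γ : Type*} [Group Γ] {Γ₀ : Subgroup Γ}
    {t : Γ ⧸ Γ₀ → Γ} (ht : ∀ c : Γ ⧸ Γ₀, QuotientGroup.mk (t c) = c) {g : Γ} {c d : Γ ⧸ Γ₀} :
    (t c)⁻¹ * g * t d ∈ Γ₀ ↔ c = g • d := by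
  rw [mul_assoc, ← QuotientGroup.eq, ht, ← smul_eq_mul, ← MulAction.Quotient.smul_mk, ht]

namespace Subgroup

variable {Γ R : Type*} [Group Γ] (Γ₀ : Subgroup Γ) [DecidablePred (· ∈ Γ₀)]

def extendByZero [Zero R] (φ : Γ₀ → R) (x : Γ) : R :=
  if h : x ∈ Γ₀ then φ ⟨x, h⟩ else 0

def inducedBlocks [Zero R] (t : Γ ⧸ Γ₀ → Γ) (φ : Γ₀ → R) (g : Γ) :
    Matrix (Γ ⧸ Γ₀) (Γ ⧸ Γ₀) R :=
  Matrix.of fun c d => Γ₀.extendByZero φ ((t c)⁻¹ * g * t d)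

variable {Γ₀}

theorem extendByZero_of_mem [Zero R] (φ : Γ₀ → R) {x : Γ} (hx : x ∈ Γ₀) :
    Γ₀.extendByZero φ x = φ ⟨x, hx⟩ :=
  dif_pos hx

theorem extendByZero_of_notMem [Zero R] (φ : Γ₀ → R) {x : Γ} (hx : x ∉ Γ₀) :
    Γ₀.extendByZero φ x = 0 :=
  dif_neg hx

theorem extendByZero_one [MulZeroOneClass R] (φ : Γ₀ →* R) : Γ₀.extendByZero φ 1 = 1 :=
  (extendByZero_of_mem φ Γ₀.one_mem).trans φ.map_one

theorem extendByZero_mul_of_mem_right [MulZeroOneClass R] (φ : Γ₀ →* R) (x : Γ) {y : Γ}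
    (hy : y ∈ Γ₀) :
    Γ₀.extendByZero φ (x * y) = Γ₀.extendByZero φ x * Γ₀.extendByZero φ y := by
  by_cases hx : x ∈ Γ₀
  · rw [extendByZero_of_mem φ (Γ₀.mul_mem hx hy), extendByZero_of_mem φ hx,
      extendByZero_of_mem φ hy, ← map_mul]
    rfl
  · rw [extendByZero_of_notMem φ (mt (Γ₀.mul_mem_cancel_right hy).1 hx),
      extendByZero_of_notMem φ hx, zero_mul]

theorem extendByZero_inv [AddMonoid R] [StarAddMonoid R] (φ : Γ₀ → R)
    (hφ : ∀ x, φ x⁻¹ = star (φ x)) (x : Γ) :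
    Γ₀.extendByZero φ x⁻¹ = star (Γ₀.extendByZero φ x) := by
  by_cases hx : x ∈ Γ₀
  · rw [extendByZero_of_mem φ (Γ₀.inv_mem hx), extendByZero_of_mem φ hx, ← hφ]
    rfl
  · rw [extendByZero_of_notMem φ (mt Γ₀.inv_mem_iff.1 hx), extendByZero_of_notMem φ hx,
      star_zero]

variable {t : Γ ⧸ Γ₀ → Γ}

theorem inducedBlocks_apply [Zero R] (φ : Γ₀ → R) (g : Γ) (c d : Γ ⧸ Γ₀) :
    Γ₀.inducedBlocks t φ g c d = Γ₀.extendByZero φ ((t c)⁻¹ * g * t d) :=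
  rfl

theorem inducedBlocks_inv [AddMonoid R] [StarAddMonoid R] (φ : Γ₀ → R)
    (hφ : ∀ x, φ x⁻¹ = star (φ x)) (g : Γ) :
    Γ₀.inducedBlocks t φ g⁻¹ = star (Γ₀.inducedBlocks t φ g) := by
  ext c d
  rw [Matrix.star_apply, inducedBlocks_apply, inducedBlocks_apply, ← extendByZero_inv φ hφ]
  group

section Transversal

variable (ht : ∀ c : Γ ⧸ Γ₀, QuotientGroup.mk (t c) = c)
include ht

theorem inducedBlocks_one [DecidableEq (Γ ⧸ Γ₀)] [MulZeroOneClass R] (φ : Γ₀ →* R) :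
    Γ₀.inducedBlocks t φ 1 = 1 := by
  ext c d
  rw [inducedBlocks_apply, Matrix.one_apply]
  split_ifs with hcd
  · rw [hcd, mul_one, inv_mul_cancel, extendByZero_one]
  · rw [extendByZero_of_notMem φ]
    rwa [QuotientGroup.inv_mul_mul_mem_iff_eq_smul ht, one_smul]

theorem inducedBlocks_mul [Fintype (Γ ⧸ Γ₀)] [Semiring R] (φ : Γ₀ →* R) (g h : Γ) :
    Γ₀.inducedBlocks t φ (g * h) = Γ₀.inducedBlocks t φ g * Γ₀.inducedBlocks t φ h := by
  ext c e
  simp only [inducedBlocks_apply, Matrix.mul_apply]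
  have he : (t (h • e))⁻¹ * h * t e ∈ Γ₀ := (QuotientGroup.inv_mul_mul_mem_iff_eq_smul ht).2 rfl
  rw [Finset.sum_eq_single (h • e), ← extendByZero_mul_of_mem_right φ _ he]
  · group
  · intro d _ hd
    rw [extendByZero_of_notMem φ (mt (QuotientGroup.inv_mul_mul_mem_iff_eq_smul ht).1 hd),
      mul_zero]
  · exact absurd (Finset.mem_univ _)

def inducedBlocksHom [Fintype (Γ ⧸ Γ₀)] [DecidableEq (Γ ⧸ Γ₀)] [Semiring R] (φ : Γ₀ →* R) :
    Γ →* Matrix (Γ ⧸ Γ₀) (Γ ⧸ Γ₀) R where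
  toFun := Γ₀.inducedBlocks t φ
  map_one' := inducedBlocks_one ht φ
  map_mul' := inducedBlocks_mul ht φ

end Transversal

end Subgroup

theorem inducedRep_eq_comp_inducedBlocks {Γ : Type*} [Group Γ] (Γ₀ : Subgroup Γ)
    [DecidablePred (· ∈ Γ₀)] (t : Γ ⧸ Γ₀ → Γ) {n : ℕ}
    (ρ : Γ₀ →* Matrix.unitaryGroup (Fin n) ℂ) (g : Γ) :
    inducedRep Γ₀ t ρ g =
      Matrix.comp _ _ _ _ ℂ (Γ₀.inducedBlocks t (fun x => (ρ x : Matrix (Fin n) (Fin n) ℂ)) g) := by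
  ext p q
  simp only [inducedRep, Matrix.comp_apply, Subgroup.inducedBlocks, Subgroup.extendByZero,
    Matrix.of_apply]
  split_ifs <;> rfl

/-- For a finite-index subgroup `Γ₀ ≤ Γ` with transversal `t` and a unitary
representation `ρ : Γ₀ → U(n)`, each induced matrix `Ind(ρ)(g)` is unitary, and
`g ↦ Ind(ρ)(g)` is a group homomorphism into the unitary group of matrices
indexed by `(Γ/Γ₀) × Fin n`. -/
theorem inducedRep_unitary_monoidHom {Γ : Type*} [Group Γ] (Γ₀ : Subgroup Γ)
    [DecidablePred (· ∈ Γ₀)] [Fintype (Γ ⧸ Γ₀)] [DecidableEq (Γ ⧸ Γ₀)]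
    (t : Γ ⧸ Γ₀ → Γ) (ht : ∀ c : Γ ⧸ Γ₀, QuotientGroup.mk (t c) = c)
    (n : ℕ) (ρ : Γ₀ →* Matrix.unitaryGroup (Fin n) ℂ) :
    (∀ g : Γ, inducedRep Γ₀ t ρ g ∈ Matrix.unitaryGroup ((Γ ⧸ Γ₀) × Fin n) ℂ) ∧
    inducedRep Γ₀ t ρ 1 = 1 ∧
    (∀ g h : Γ, inducedRep Γ₀ t ρ (g * h) = inducedRep Γ₀ t ρ g * inducedRep Γ₀ t ρ h) := by
  let φ := (unitary (Matrix (Fin n) (Fin n) ℂ)).subtype.comp ρ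
  have hφ : ∀ x, φ x⁻¹ = star (φ x) := fun x => congrArg Subtype.val (map_inv ρ x)
  let f : Γ →* Matrix ((Γ ⧸ Γ₀) × Fin n) ((Γ ⧸ Γ₀) × Fin n) ℂ :=
    (Matrix.compRingEquiv (Γ ⧸ Γ₀) (Fin n) ℂ : _ →* _).comp (Subgroup.inducedBlocksHom ht φ)
  have hf : ∀ g, f g = inducedRep Γ₀ t ρ g := fun g =>
    (inducedRep_eq_comp_inducedBlocks Γ₀ t ρ g).symm
  have hf_inv : ∀ g, f g⁻¹ = star (f g) := fun g =>
    (congrArg (Matrix.comp _ _ _ _ ℂ) (Subgroup.inducedBlocks_inv φ hφ g)).trans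
      (Matrix.comp_star _)
  refine ⟨fun g => hf g ▸ f.mem_unitary_of_map_inv hf_inv g, ?_, fun g h => ?_⟩
  · rw [← hf, map_one]
  · simp only [← hf, map_mul]
end

section
/- Let Γ be an infinite, finitely generated, simple group. Then every group homomorphism ρ : Γ → U(n) into a finite-dimensional unitary group is trivial, i.e. ρ(g) = 1 for all g ∈ Γ. -/
/-!
Let `S` be a finite generating set of `Γ`. The matrix entries of `ρ(s)^{±1}`, `s ∈ S`, generate a
finitely generated subring `A ⊆ ℂ`, and `ρ` factors through `GL_n(A)`. A finitely generated
`ℤ`-algebra is a Jacobson ring whose residue fields at maximal ideals are finite (Zariski's lemma),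
so for a reduced `A` the maximal ideals separate the points of `A`. Reducing modulo a suitable
maximal ideal therefore maps any `ρ(g) ≠ 1` to a nontrivial element of the finite group
`GL_n(A ⧸ m)`. But the kernel of that reduction is a normal subgroup of the simple group `Γ`, and
it is neither trivial (`Γ` is infinite) nor everything.
-/

open Matrix

theorem Int.jacobson_bot : (⊥ : Ideal ℤ).jacobson = ⊥ := by
  refine eq_bot_iff.mpr fun x hx => ?_
  rw [Ideal.mem_jacobson_bot] at hx
  have h₁ := Int.isUnit_iff.mp (hx 1)
  have h₂ := Int.isUnit_iff.mp (hx (-1))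
  rw [Ideal.mem_bot]
  omega

theorem isJacobsonRing_of_jacobson_bot {R : Type*} [CommRing R] [Ring.DimensionLEOne R]
    (h : (⊥ : Ideal R).jacobson = ⊥) : IsJacobsonRing R := by
  refine isJacobsonRing_iff_prime_eq.mpr fun P hP => ?_
  rcases eq_or_ne P ⊥ with rfl | hP₀
  · exact h
  · have := Ring.DimensionLEOne.maximalOfPrime hP₀ hP
    exact Ideal.jacobson_eq_self_of_isMaximal

instance Int.isJacobsonRing : IsJacobsonRing ℤ :=
  isJacobsonRing_of_jacobson_bot Int.jacobson_bot

theorem finite_of_field_of_finiteType_int (K : Type*) [Field K] [Algebra ℤ K]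
    [Algebra.FiniteType ℤ K] : Finite K := by
  obtain rfl : ‹Algebra ℤ K› = Ring.toIntAlgebra K := Subsingleton.elim _ _
  have := finite_of_finite_type_of_isJacobsonRing ℤ K
  -- `K` is integral over `ℤ`, so the kernel of `ℤ → K` is a maximal ideal.
  have hker : (⊥ : Ideal K).under ℤ ≠ ⊥ :=
    Ring.ne_bot_of_isMaximal_of_not_isField inferInstance Int.not_isField
  obtain ⟨k, hk, hk₀⟩ := Submodule.exists_mem_ne_zero_of_ne_bot hker
  rw [Ideal.under, Ideal.mem_comap, Ideal.mem_bot] at hk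
  refine Module.finite_of_fg_torsion K fun x => ⟨⟨k, mem_nonZeroDivisors_of_ne_zero hk₀⟩, ?_⟩
  rw [Submonoid.smul_def, zsmul_eq_mul, ← eq_intCast (algebraMap ℤ K), hk, zero_mul]

theorem exists_isMaximal_finite_quotient_not_mem {A : Type*} [CommRing A] [IsReduced A]
    [Algebra.FiniteType ℤ A] {a : A} (ha : a ≠ 0) :
    ∃ m : Ideal A, m.IsMaximal ∧ Finite (A ⧸ m) ∧ a ∉ m := by
  have := isJacobsonRing_of_finiteType (A := ℤ) (B := A)
  have hjac : (⊥ : Ideal A).jacobson = ⊥ := by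
    rw [← Ideal.radical_eq_jacobson, Ideal.radical_bot_of_isReduced]
  have ha' : a ∉ (⊥ : Ideal A).jacobson := by rwa [hjac, Ideal.mem_bot]
  simp only [Ideal.jacobson, Ideal.mem_sInf, not_forall] at ha'
  obtain ⟨m, ⟨-, hm⟩, ham⟩ := ha'
  let := Ideal.Quotient.field m
  have := Algebra.FiniteType.quotient ℤ m
  exact ⟨m, hm, finite_of_field_of_finiteType_int (A ⧸ m), ham⟩

theorem Matrix.exists_finite_quotient_map_ne {n A : Type*} [CommRing A] [IsReduced A]
    [Algebra.FiniteType ℤ A] {M N : Matrix n n A} (h : M ≠ N) :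
    ∃ I : Ideal A, Finite (A ⧸ I) ∧ M.map (Ideal.Quotient.mk I) ≠ N.map (Ideal.Quotient.mk I) := by
  obtain ⟨i, j, hij⟩ : ∃ i j, M i j ≠ N i j := by
    by_contra! h'
    exact h (Matrix.ext h')
  obtain ⟨m, -, hfin, hm⟩ := exists_isMaximal_finite_quotient_not_mem (sub_ne_zero.mpr hij)
  refine ⟨m, hfin, fun hMN => hm ?_⟩
  rw [← Ideal.Quotient.eq]
  exact congrFun₂ hMN i j

theorem IsSimpleGroup.monoidHom_eq_one_of_finite {Γ M : Type*} [Group Γ] [Infinite Γ]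
    [Monoid M] [Finite M] (hΓ : IsSimpleGroup Γ) (f : Γ →* M) : f = 1 := by
  rcases hΓ.eq_bot_or_eq_top_of_normal f.toHomUnits.ker f.toHomUnits.normal_ker with h | h
  · have := Finite.of_injective _ (f.toHomUnits.ker_eq_bot_iff.mp h)
    exact (not_finite Γ).elim
  · ext g
    have : f.toHomUnits g = 1 := f.toHomUnits.mem_ker.mp (h ▸ Subgroup.mem_top g)
    simpa using congrArg Units.val this

theorem IsSimpleGroup.monoidHom_matrix_eq_one {Γ n A : Type*} [Group Γ] [Infinite Γ]
    [Fintype n] [DecidableEq n] [CommRing A] [IsReduced A] [Algebra.FiniteType ℤ A]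
    (hΓ : IsSimpleGroup Γ) (ρ : Γ →* Matrix n n A) : ρ = 1 := by
  ext g : 1
  by_contra hg
  obtain ⟨I, hI, hne⟩ := Matrix.exists_finite_quotient_map_ne hg
  have := hΓ.monoidHom_eq_one_of_finite ((Ideal.Quotient.mk I).mapMatrix.toMonoidHom.comp ρ)
  exact hne ((DFunLike.congr_fun this g).trans (map_one (Ideal.Quotient.mk I).mapMatrix).symm)

namespace MonoidHom

variable {Γ n K R : Type*} [Group Γ] [Fintype n] [DecidableEq n] [CommSemiring K] [Semiring R]
  [Algebra K R]

def matrixCodRestrict (ρ : Γ →* Matrix n n R) (A : Subalgebra K R) (h : ∀ g, ρ g ∈ A.matrix) :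
    Γ →* Matrix n n A where
  toFun g := Matrix.of fun i j => ⟨ρ g i j, h g i j⟩
  map_one' := Matrix.map_injective Subtype.val_injective <| by
    change ρ 1 = A.val.mapMatrix 1
    rw [map_one A.val.mapMatrix]
    exact ρ.map_one
  map_mul' a b := Matrix.map_injective Subtype.val_injective <| by
    change ρ (a * b) = A.val.mapMatrix (_ * _)
    rw [map_mul A.val.mapMatrix]
    exact ρ.map_mul a b

theorem map_val_matrixCodRestrict (ρ : Γ →* Matrix n n R) (A : Subalgebra K R)
    (h : ∀ g, ρ g ∈ A.matrix) (g : Γ) : (ρ.matrixCodRestrict A h g).map Subtype.val = ρ g :=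
  rfl

end MonoidHom

theorem Group.FG.exists_fg_subalgebra_forall_mem_matrix {Γ n R : Type*} [Group Γ] [Fintype n]
    [DecidableEq n] [CommRing R] (hΓ : Group.FG Γ) (ρ : Γ →* Matrix n n R) :
    ∃ A : Subalgebra ℤ R, Algebra.FiniteType ℤ A ∧ ∀ g, ρ g ∈ A.matrix := by
  obtain ⟨S, hS⟩ := hΓ.out
  let gens : Set Γ := S ∪ (S : Set Γ)⁻¹
  let entries : Set R := ⋃ s ∈ gens, Set.range fun p : n × n => ρ s p.1 p.2
  have hfin : entries.Finite :=
    (S.finite_toSet.union S.finite_toSet.inv).biUnion fun _ _ => Set.finite_range _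
  refine ⟨Algebra.adjoin ℤ entries, Algebra.FiniteType.adjoin_of_finite hfin, fun g => ?_⟩
  have hg : g ∈ Submonoid.closure gens := by
    rw [← Subgroup.closure_toSubmonoid, hS]; trivial
  refine Submonoid.closure_le (S := (Algebra.adjoin ℤ entries).matrix.toSubmonoid.comap ρ)
    |>.mpr (fun s hs i j => Algebra.subset_adjoin ?_) hg
  exact Set.mem_biUnion hs ⟨(i, j), rfl⟩

theorem IsSimpleGroup.monoidHom_matrix_eq_one_of_fg {Γ n R : Type*} [Group Γ] [Infinite Γ]
    [Fintype n] [DecidableEq n] [CommRing R] [IsReduced R] (hfg : Group.FG Γ)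
    (hΓ : IsSimpleGroup Γ) (ρ : Γ →* Matrix n n R) : ρ = 1 := by
  obtain ⟨A, hA, hρA⟩ := hfg.exists_fg_subalgebra_forall_mem_matrix ρ
  have : IsReduced A := isReduced_of_injective A.val Subtype.val_injective
  ext g : 1
  rw [← ρ.map_val_matrixCodRestrict A hρA g,
    hΓ.monoidHom_matrix_eq_one (ρ.matrixCodRestrict A hρA)]
  exact Matrix.map_one _ rfl rfl

/-- Every finite-dimensional unitary representation of an infinite, finitely
generated, simple group is trivial. -/
theorem simple_group_trivial_unitary_reps (Γ : Type*) [Group Γ] [Infinite Γ]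
    (hfg : Group.FG Γ) (hsimple : IsSimpleGroup Γ) (n : ℕ)
    (ρ : Γ →* Matrix.unitaryGroup (Fin n) ℂ) :
    ∀ g : Γ, ρ g = 1 := by
  intro g
  have := hsimple.monoidHom_matrix_eq_one_of_fg hfg ((unitaryGroup (Fin n) ℂ).subtype.comp ρ)
  exact Subtype.ext (DFunLike.congr_fun this g)
end
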